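/- arXiv:1602.01157 — 3 statements merged into one kernel-verified Lean document; each statement's English description precedes it below -/
import Mathlib

section
/- In the Kauffman monoid K_n, if k and l are of different parity (1 ≤ k, l ≤ n-1), then the product h_k h_l is a product of idempotents of the form h_{i+1}h_i and h_i h_{i+1}. -/
namespace Kauffman

open FreeMonoid

/-- Defining relations of the Kauffman monoid `K n`: letter `0` is the generator `c`,
letter `i` (for `1 ≤ i < n`) is the generator `h_i`.  The relations are
`h_i h_j = h_j h_i` for `|i - j| ≥ 2`, `h_i h_j h_i = h_i` for `|i - j| = 1`, and
`h_i ^ 2 = c h_i = h_i c`. -/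
inductive Rel (n : ℕ) : FreeMonoid ℕ → FreeMonoid ℕ → Prop
  | comm (i j : ℕ) : 1 ≤ i → i < n → 1 ≤ j → j < n → i + 2 ≤ j →
      Rel n (of i * of j) (of j * of i)
  | braid₁ (i : ℕ) : 1 ≤ i → i + 1 < n →
      Rel n (of i * of (i + 1) * of i) (of i)
  | braid₂ (i : ℕ) : 1 ≤ i → i + 1 < n →
      Rel n (of (i + 1) * of i * of (i + 1)) (of (i + 1))
  | sq (i : ℕ) : 1 ≤ i → i < n → Rel n (of i * of i) (of 0 * of i)
  | ccomm (i : ℕ) : 1 ≤ i → i < n → Rel n (of 0 * of i) (of i * of 0)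

def kcon (n : ℕ) : Con (FreeMonoid ℕ) := conGen (Rel n)

/-- The Kauffman monoid `K_n`, as the quotient of the free monoid by the defining relations. -/
abbrev K (n : ℕ) := (kcon n).Quotient

/-- The generator `c` of `K n`. -/
def C (n : ℕ) : K n := (kcon n).mk' (of 0)

/-- The generator `h_i` of `K n` (meaningful for `1 ≤ i < n`). -/
def H (n : ℕ) (i : ℕ) : K n := (kcon n).mk' (of i)

/-- Descending block `h[j,i] = h_j h_{j-1} ⋯ h_i` (for `i ≤ j`). -/
def blockD (n j i : ℕ) : K n := ((List.range' i (j + 1 - i)).reverse.map (H n)).prod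

/-- Ascending block `h[i,j] = h_i h_{i+1} ⋯ h_j` (for `i ≤ j`). -/
def blockA (n i j : ℕ) : K n := ((List.range' i (j + 1 - i)).map (H n)).prod

/-- General `h[i,j]`: ascending product if `i ≤ j`, descending otherwise. -/
def hb (n i j : ℕ) : K n := if i ≤ j then blockA n i j else blockD n i j

/-- The set `E'_n` of the length-two idempotents `h_{i+1} h_i` and `h_i h_{i+1}`. -/
def E' (n : ℕ) : Set (K n) :=
  {x | ∃ i, 1 ≤ i ∧ i + 1 < n ∧ (x = H n (i + 1) * H n i ∨ x = H n i * H n (i + 1))}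

section Generic
variable {M : Type*} [Monoid M] (a x y z : M)

theorem gen1 (c1 : a*y = y*a) (c2 : a*z = z*a) (b1 : y*x*y = y) (b2 : z*y*z = z) :
    a * z = (z*y) * (a*x) * (y*z) := by
  have e1 : y*(x*(y*z)) = y*z := by rw [← mul_assoc, ← mul_assoc, b1]
  have e2 : z*(y*z) = z := by rw [← mul_assoc, b2]
  have e3 : y*(a*(x*(y*z))) = a*(y*(x*(y*z))) := by
    rw [← mul_assoc, ← c1, mul_assoc]
  calc a * z = a * (z*(y*z)) := by rw [e2]
  _ = a * (z * (y*(x*(y*z)))) := by rw [e1]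
  _ = (a*z) * (y*(x*(y*z))) := by rw [mul_assoc]
  _ = z * (a * (y*(x*(y*z)))) := by rw [c2, mul_assoc]
  _ = z * (y*(a*(x*(y*z)))) := by rw [e3]
  _ = (z*y) * (a*x) * (y*z) := by simp only [mul_assoc]

theorem gen2 (c1 : a*y = y*a) (c2 : a*z = z*a) (b1 : y*x*y = y) (b2 : z*y*z = z) :
    z * a = (z*y) * (x*a) * (y*z) := by
  have e2 : z*(y*z) = z := by rw [← mul_assoc, b2]
  have e3 : a*(y*z) = y*(a*z) := by rw [← mul_assoc, c1, mul_assoc]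
  calc z * a = z*(y*z) * a := by rw [e2]
  _ = z * (y*x*y * (z * a)) := by rw [b1]; simp only [mul_assoc]
  _ = z * (y * (x * (y * (a*z)))) := by rw [← c2]; simp only [mul_assoc]
  _ = z * (y * (x * (a * (y*z)))) := by rw [e3]
  _ = (z*y) * (x*a) * (y*z) := by simp only [mul_assoc]

end Generic

lemma rel_eq {n : ℕ} {a b : FreeMonoid ℕ} (h : Rel n a b) :
    (kcon n).mk' a = (kcon n).mk' b := (kcon n).eq.mpr (ConGen.Rel.of _ _ h)

lemma hcomm {n i j : ℕ} (h1 : 1 ≤ i) (h2 : i < n) (h3 : 1 ≤ j) (h4 : j < n) (h5 : i + 2 ≤ j) :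
    H n i * H n j = H n j * H n i := by
  simpa only [map_mul, H] using rel_eq (Rel.comm i j h1 h2 h3 h4 h5)

lemma hbraid₂ {n i : ℕ} (h1 : 1 ≤ i) (h2 : i + 1 < n) :
    H n (i+1) * H n i * H n (i+1) = H n (i+1) := by
  simpa only [map_mul, H] using rel_eq (Rel.braid₂ i h1 h2)

lemma aux (n : ℕ) (m : ℕ) : ∀ k, 1 ≤ k → k + (2*m+1) < n →
    H n k * H n (k+(2*m+1)) ∈ Subsemigroup.closure (E' n) ∧
    H n (k+(2*m+1)) * H n k ∈ Subsemigroup.closure (E' n) := by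
  induction m with
  | zero =>
    intro k hk1 hkn
    have hkn' : k + 1 < n := by omega
    constructor
    · exact Subsemigroup.subset_closure ⟨k, hk1, hkn', Or.inr rfl⟩
    · exact Subsemigroup.subset_closure ⟨k, hk1, hkn', Or.inl rfl⟩
  | succ m ih =>
    intro k hk1 hkn
    have hidx : k + (2*(m+1)+1) = k + (2*m+1) + 2 := by omega
    rw [hidx]
    set j : ℕ := k + (2*m+1) with hj
    have hjn : j + 2 < n := by omega
    have hkn' : k < n := by omega
    have c1 : H n k * H n (j+1) = H n (j+1) * H n k :=
      hcomm hk1 hkn' (by omega) (by omega) (by omega)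
    have c2 : H n k * H n (j+2) = H n (j+2) * H n k :=
      hcomm hk1 hkn' (by omega) (by omega) (by omega)
    have b1 : H n (j+1) * H n j * H n (j+1) = H n (j+1) :=
      hbraid₂ (by omega) (by omega)
    have b2 : H n (j+2) * H n (j+1) * H n (j+2) = H n (j+2) := by
      have := hbraid₂ (n := n) (i := j+1) (by omega) (by omega)
      simpa using this
    have hE1 : H n (j+2) * H n (j+1) ∈ E' n := ⟨j+1, by omega, by omega, Or.inl (by norm_num)⟩
    have hE2 : H n (j+1) * H n (j+2) ∈ E' n := ⟨j+1, by omega, by omega, Or.inr (by norm_num)⟩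
    obtain ⟨ih1, ih2⟩ := ih k hk1 (by omega)
    constructor
    · rw [gen1 (H n k) (H n j) (H n (j+1)) (H n (j+2)) c1 c2 b1 b2]
      exact mul_mem (mul_mem (Subsemigroup.subset_closure hE1) ih1)
        (Subsemigroup.subset_closure hE2)
    · rw [gen2 (H n k) (H n j) (H n (j+1)) (H n (j+2)) c1 c2 b1 b2]
      exact mul_mem (mul_mem (Subsemigroup.subset_closure hE1) ih2)
        (Subsemigroup.subset_closure hE2)

/-- If `1 ≤ k, l < n` and `k, l` have different parity, then `h_k h_l`
is a product of the idempotents `h_{i+1} h_i` and `h_i h_{i+1}` (elements of `E'_n`). -/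
theorem hk_hl_in_closure (n : ℕ) (hn : 3 ≤ n) (k l : ℕ)
    (hk1 : 1 ≤ k) (hk2 : k < n) (hl1 : 1 ≤ l) (hl2 : l < n) (hpar : k % 2 ≠ l % 2) :
    H n k * H n l ∈ Subsemigroup.closure (E' n) := by
  have hne : k ≠ l := fun h => hpar (congrArg (· % 2) h)
  rcases hne.lt_or_gt with hlt | hgt
  · obtain ⟨m, hm⟩ : ∃ m, l = k + (2*m+1) := by
      refine ⟨(l - k - 1)/2, ?_⟩; omega
    subst hm
    exact (aux n m k hk1 hl2).1
  · obtain ⟨m, hm⟩ : ∃ m, k = l + (2*m+1) := by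
      refine ⟨(k - l - 1)/2, ?_⟩; omega
    subst hm
    exact (aux n m l hl1 hk2).2


end Kauffman
end

section
/- In the Kauffman monoid K_n (n ≥ 3), if an element w is a product of idempotents from E'_n, then so is c²w. -/
namespace Kauffman

open FreeMonoid

lemma relEq {n : ℕ} {x y : FreeMonoid ℕ} (h : Rel n x y) :
    (kcon n).mk' x = (kcon n).mk' y :=
  (Con.eq _).mpr (ConGen.Rel.of _ _ h)

lemma sq' {n i : ℕ} (h1 : 1 ≤ i) (h2 : i < n) (x : K n) :
    H n i * (H n i * x) = C n * (H n i * x) := by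
  have := relEq (Rel.sq i h1 h2)
  simp only [map_mul] at this
  rw [← mul_assoc, ← mul_assoc]
  exact congrArg (· * x) this

lemma ccomm' {n i : ℕ} (h1 : 1 ≤ i) (h2 : i < n) (x : K n) :
    H n i * (C n * x) = C n * (H n i * x) := by
  have := relEq (Rel.ccomm i h1 h2)
  simp only [map_mul] at this
  rw [← mul_assoc, ← mul_assoc]
  exact congrArg (· * x) this.symm

lemma braid₁' {n i : ℕ} (h1 : 1 ≤ i) (h2 : i + 1 < n) (x : K n) :
    H n i * (H n (i + 1) * (H n i * x)) = H n i * x := by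
  have := relEq (Rel.braid₁ i h1 h2)
  simp only [map_mul] at this
  rw [← mul_assoc, ← mul_assoc]
  exact congrArg (· * x) this

lemma braid₂' {n i : ℕ} (h1 : 1 ≤ i) (h2 : i + 1 < n) (x : K n) :
    H n (i + 1) * (H n i * (H n (i + 1) * x)) = H n (i + 1) * x := by
  have := relEq (Rel.braid₂ i h1 h2)
  simp only [map_mul] at this
  rw [← mul_assoc, ← mul_assoc]
  exact congrArg (· * x) this

lemma key₁ {n i : ℕ} (h1 : 1 ≤ i) (h2 : i + 1 < n) :
    C n * C n * (H n (i + 1) * H n i) =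
      H n (i + 1) * H n i * (H n i * H n (i + 1)) * (H n (i + 1) * H n i) := by
  have hi : i < n := lt_of_le_of_lt (Nat.le_succ i) h2
  have hi1 : 1 ≤ i + 1 := Nat.le_succ_of_le h1
  simp only [mul_assoc]
  rw [sq' h1 hi, sq' hi1 h2, ccomm' hi1 h2, ccomm' h1 hi, ccomm' hi1 h2,
    braid₂' h1 h2]

lemma key₂ {n i : ℕ} (h1 : 1 ≤ i) (h2 : i + 1 < n) :
    C n * C n * (H n i * H n (i + 1)) =
      H n i * H n (i + 1) * (H n (i + 1) * H n i) * (H n i * H n (i + 1)) := by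
  have hi : i < n := lt_of_le_of_lt (Nat.le_succ i) h2
  have hi1 : 1 ≤ i + 1 := Nat.le_succ_of_le h1
  simp only [mul_assoc]
  rw [sq' hi1 h2, sq' h1 hi, ccomm' h1 hi, ccomm' hi1 h2, ccomm' h1 hi,
    braid₁' h1 h2]

/-- If `w ∈ K n` (`n ≥ 3`) is a product of idempotents from `E'_n`,
then so is `c² w`. -/
theorem c_sq_mul_in_closure (n : ℕ) (hn : 3 ≤ n) (w : K n)
    (hw : w ∈ Subsemigroup.closure (E' n)) :
    C n * C n * w ∈ Subsemigroup.closure (E' n) := by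
  induction hw using Subsemigroup.closure_induction with
  | mem x hx =>
    obtain ⟨i, h1, h2, hx' | hx'⟩ := hx
    · have ha : H n (i + 1) * H n i ∈ E' n := ⟨i, h1, h2, Or.inl rfl⟩
      have hb : H n i * H n (i + 1) ∈ E' n := ⟨i, h1, h2, Or.inr rfl⟩
      rw [hx', key₁ h1 h2]
      exact mul_mem (mul_mem (Subsemigroup.subset_closure ha)
        (Subsemigroup.subset_closure hb)) (Subsemigroup.subset_closure ha)
    · have ha : H n (i + 1) * H n i ∈ E' n := ⟨i, h1, h2, Or.inl rfl⟩
      have hb : H n i * H n (i + 1) ∈ E' n := ⟨i, h1, h2, Or.inr rfl⟩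
      rw [hx', key₂ h1 h2]
      exact mul_mem (mul_mem (Subsemigroup.subset_closure hb)
        (Subsemigroup.subset_closure ha)) (Subsemigroup.subset_closure hb)
  | mul x y hx hy ihx ihy =>
    rw [← mul_assoc]
    exact mul_mem ihx hy

end Kauffman
end

section
/- In the Kauffman monoid K_n, the relation h[j,i]·h[l,k] = h[j,k] holds whenever j ≥ k and |i - l| = 1, where h[j,i] denotes the descending product h_j h_{j-1}⋯h_i (for i ≤ j). -/
namespace Kauffman

open FreeMonoid

lemma Hbraid₁ (n i : ℕ) (h1 : 1 ≤ i) (h2 : i + 1 < n) :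
    H n i * H n (i + 1) * H n i = H n i := by
  have h : kcon n (of i * of (i + 1) * of i) (of i) :=
    ConGen.Rel.of _ _ (Rel.braid₁ i h1 h2)
  simpa [H, map_mul] using (Con.eq _).2 h

lemma Hbraid₂ (n i : ℕ) (h1 : 1 ≤ i) (h2 : i + 1 < n) :
    H n (i + 1) * H n i * H n (i + 1) = H n (i + 1) := by
  have h : kcon n (of (i + 1) * of i * of (i + 1)) (of (i + 1)) :=
    ConGen.Rel.of _ _ (Rel.braid₂ i h1 h2)
  simpa [H, map_mul] using (Con.eq _).2 h

lemma blockD_split (n j m k : ℕ) (hkm : k ≤ m) (hmj : m ≤ j) :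
    blockD n j (m + 1) * blockD n m k = blockD n j k := by
  unfold blockD
  rw [← List.prod_append, ← List.map_append, ← List.reverse_append]
  have h1 : m + 1 = k + (m + 1 - k) := by omega
  have h2 : j + 1 - k = (j + 1 - (m + 1)) + (m + 1 - k) := by omega
  rw [h2, Nat.add_comm (j + 1 - (m + 1)), ← List.range'_append_1 (s := k) (m := m + 1 - k) (n := j + 1 - (m + 1)), ← h1]

lemma blockD_self (n j : ℕ) : blockD n j j = H n j := by
  simp [blockD]

lemma blockD_cons (n : ℕ) {j i : ℕ} (h : i ≤ j) :
    blockD n j i = blockD n j (i + 1) * H n i := by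
  rw [← blockD_self n i, blockD_split n j i i le_rfl h]

lemma blockD_pair (n i : ℕ) : blockD n (i + 1) i = H n (i + 1) * H n i := by
  rw [blockD_cons n (Nat.le_succ i), blockD_self]

lemma lemB (n i j : ℕ) (h1 : 1 ≤ i) (h2 : i + 1 < n) (hij : i ≤ j) :
    blockD n j i * (H n (i + 1) * H n i) = blockD n j i := by
  rw [blockD_cons n hij, mul_assoc, ← mul_assoc (H n i) (H n (i + 1)) (H n i),
    Hbraid₁ n i h1 h2]

lemma lemC (n i j : ℕ) (h1 : 1 ≤ i) (h2 : i + 1 < n) (hij : i + 1 ≤ j) :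
    blockD n j i * H n (i + 1) = blockD n j (i + 1) := by
  have hs : blockD n j (i + 2) * blockD n (i + 1) i = blockD n j i :=
    blockD_split n j (i + 1) i (Nat.le_succ i) hij
  have hs' : blockD n j (i + 2) * blockD n (i + 1) (i + 1) = blockD n j (i + 1) :=
    blockD_split n j (i + 1) (i + 1) le_rfl hij
  rw [← hs, blockD_pair, mul_assoc, Hbraid₂ n i h1 h2, ← blockD_self n (i+1), hs']

/-- Relation (2) of the block presentation: for `1 ≤ i ≤ j < n` and
`1 ≤ k ≤ l < n` with `j ≥ k` and `|i - l| = 1`, `h[j,i] · h[l,k] = h[j,k]`. -/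
theorem block_absorb (n : ℕ) (hn : 3 ≤ n) (i j k l : ℕ)
    (hi : 1 ≤ i) (hij : i ≤ j) (hj : j < n)
    (hk : 1 ≤ k) (hkl : k ≤ l) (hl : l < n)
    (hjk : k ≤ j) (hil : i = l + 1 ∨ l = i + 1) :
    blockD n j i * blockD n l k = blockD n j k := by
  rcases hil with rfl | rfl
  · exact blockD_split n j l k hkl (by omega)
  · -- l = i + 1
    rcases Nat.lt_or_ge k (i + 1) with hki | hki
    · -- k ≤ i
      have hki' : k ≤ i := by omega
      rcases Nat.eq_or_lt_of_le hki' with rfl | hki''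
      · -- k = i
        rw [blockD_pair]
        exact lemB n k j hk hl hij
      · -- k < i
        have hsplit : blockD n (i + 1) (i + 1) * blockD n i k = blockD n (i + 1) k :=
          blockD_split n (i + 1) i k hki' (Nat.le_succ i)
        have hsplit2 : blockD n i (i - 1 + 1) * blockD n (i - 1) k = blockD n i k :=
          blockD_split n i (i - 1) k (by omega) (by omega)
        have hieq : i - 1 + 1 = i := by omega
        rw [hieq, blockD_self] at hsplit2
        rw [← hsplit, blockD_self, ← hsplit2, ← mul_assoc, ← mul_assoc,
          mul_assoc (blockD n j i), lemB n i j hi hl hij]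
        have hfin := blockD_split n j (i - 1) k (by omega) (by omega)
        rw [hieq] at hfin
        exact hfin
    · -- k = i + 1
      have : k = i + 1 := by omega
      subst this
      rw [blockD_self]
      exact lemC n i j hi hl hjk

end Kauffman
end
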